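/- Let Φ ∈ ℝ, R₀ ≥ 1, C ≥ 0, and let h : ℂ → ℝ be a measurable function satisfying |h(z) + (Φ/2π)·log|z|| ≤ C/|z| for all z with |z| ≥ R₀. Then the set V = { p ∈ ℂ[X] : ∫_{{z : |z| > R₀}} exp(2h(z))·|p(z)|² dA(z) < ∞ } is a ℂ-linear subspace of the polynomial ring ℂ[X], it is finite dimensional, and its dimension equals max(0, ⌈Φ/(2π) − 1⌉), i.e. the number of natural numbers n with n < Φ/(2π) − 1 (which equals the largest integer strictly smaller than Φ/(2π) when Φ > 2π, and 0 otherwise). -/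

import Mathlib

/-!
For `R₀ ≤ ‖z‖` the hypothesis traps `exp (2 h z)` between constant multiples of
`‖z‖ ^ (-Φ / π)`, and a nonzero polynomial of degree `d` is comparable to `‖z‖ ^ d` near
infinity. So the integrand is comparable to `‖z‖ ^ (2 d - Φ / π)`, which is integrable outside
a disc in the plane exactly when `2 d - Φ / π < -2`, i.e. `d < Φ / 2π - 1`. Hence `V` is the
space of polynomials of degree less than `⌈Φ / 2π - 1⌉`.
-/

open MeasureTheory Set Real Filter Bornology Asymptotics Polynomial
open scoped ENNReal

section Radial

variable {E : Type*} [NormedAddCommGroup E] [NormedSpace ℝ E] [FiniteDimensional ℝ E]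
  [MeasurableSpace E] [BorelSpace E] [Nontrivial E] (μ : Measure E) [μ.IsAddHaarMeasure]

theorem integrableOn_norm_rpow_iff {R β : ℝ} (hR : 0 < R) :
    IntegrableOn (fun x : E => ‖x‖ ^ β) {x | R < ‖x‖} μ ↔ β < -Module.finrank ℝ E := by
  have hdim : 0 < Module.finrank ℝ E := Module.finrank_pos
  have hind : {x : E | R < ‖x‖}.indicator (fun x => ‖x‖ ^ β) =
      fun x => (Ioi R).indicator (· ^ β) ‖x‖ := rfl
  rw [← integrable_indicator_iff (measurableSet_lt measurable_const measurable_norm), hind,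
    integrable_fun_norm_addHaar μ]
  simp only [smul_eq_mul]
  have hind' : (fun y : ℝ => y ^ (Module.finrank ℝ E - 1) * (Ioi R).indicator (· ^ β) y) =
      (Ioi R).indicator fun y => y ^ (Module.finrank ℝ E - 1) * y ^ β :=
    funext fun y => (indicator_mul_right (Ioi R) (fun y : ℝ => y ^ (Module.finrank ℝ E - 1))
      (· ^ β)).symm
  rw [hind', IntegrableOn, integrable_indicator_iff measurableSet_Ioi, IntegrableOn,
    Measure.restrict_restrict measurableSet_Ioi, inter_eq_left.2 (Ioi_subset_Ioi hR.le),
    ← IntegrableOn, integrableOn_congr_fun (g := fun y => y ^ (β + (Module.finrank ℝ E - 1)))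
      (fun y hy => by
        dsimp only
        rw [rpow_add (hR.trans (mem_Ioi.1 hy)), ← Nat.cast_pred hdim, rpow_natCast, mul_comm])
      measurableSet_Ioi, integrableOn_Ioi_rpow_iff hR]
  constructor <;> intro _ <;> linarith

theorem setLIntegral_norm_rpow_lt_top_iff {R β : ℝ} (hR : 0 < R) :
    ∫⁻ x in {x : E | R < ‖x‖}, ENNReal.ofReal (‖x‖ ^ β) ∂μ < ∞ ↔ β < -Module.finrank ℝ E := by
  rw [← integrableOn_norm_rpow_iff μ hR, IntegrableOn, Integrable,
    hasFiniteIntegral_iff_ofReal (ae_of_all _ fun x => by positivity),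
    and_iff_right (by fun_prop : Measurable fun x : E => ‖x‖ ^ β).aestronglyMeasurable]

theorem setLIntegral_lt_top_of_le_mul_rpow {f : E → ℝ} {R M β : ℝ} (hR : 0 < R)
    (hβ : β < -Module.finrank ℝ E) (hf : ∀ x, R < ‖x‖ → f x ≤ M * ‖x‖ ^ β) :
    ∫⁻ x in {x | R < ‖x‖}, ENNReal.ofReal (f x) ∂μ < ∞ :=
  calc ∫⁻ x in {x | R < ‖x‖}, ENNReal.ofReal (f x) ∂μ
      ≤ ∫⁻ x in {x | R < ‖x‖}, ENNReal.ofReal M * ENNReal.ofReal (‖x‖ ^ β) ∂μ :=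
        setLIntegral_mono' (measurableSet_lt measurable_const measurable_norm) fun x hx => by
          rw [← ENNReal.ofReal_mul' (by positivity)]
          exact ENNReal.ofReal_le_ofReal (hf x hx)
    _ = ENNReal.ofReal M * ∫⁻ x in {x | R < ‖x‖}, ENNReal.ofReal (‖x‖ ^ β) ∂μ :=
        lintegral_const_mul' _ _ ENNReal.ofReal_ne_top
    _ < ∞ := ENNReal.mul_lt_top ENNReal.ofReal_lt_top
        ((setLIntegral_norm_rpow_lt_top_iff μ hR).2 hβ)

theorem setLIntegral_eq_top_of_mul_rpow_le {f : E → ℝ} {R R₁ m β : ℝ} (hR : 0 < R) (hm : 0 < m)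
    (hβ : -Module.finrank ℝ E ≤ β) (hf : ∀ x, R₁ < ‖x‖ → m * ‖x‖ ^ β ≤ f x) :
    ∫⁻ x in {x | R < ‖x‖}, ENNReal.ofReal (f x) ∂μ = ∞ := by
  set R₂ := max R R₁
  have hR₂ : 0 < R₂ := hR.trans_le (le_max_left _ _)
  refine top_unique ?_
  calc ∞ = ENNReal.ofReal m * ∫⁻ x in {x | R₂ < ‖x‖}, ENNReal.ofReal (‖x‖ ^ β) ∂μ := by
        rw [not_lt_top_iff.1 (mt (setLIntegral_norm_rpow_lt_top_iff μ hR₂).1 hβ.not_gt),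
          ENNReal.mul_top (ENNReal.ofReal_pos.2 hm).ne']
    _ = ∫⁻ x in {x | R₂ < ‖x‖}, ENNReal.ofReal m * ENNReal.ofReal (‖x‖ ^ β) ∂μ :=
        (lintegral_const_mul' _ _ ENNReal.ofReal_ne_top).symm
    _ ≤ ∫⁻ x in {x | R₂ < ‖x‖}, ENNReal.ofReal (f x) ∂μ :=
        setLIntegral_mono' (measurableSet_lt measurable_const measurable_norm) fun x hx => by
          rw [← ENNReal.ofReal_mul' (by positivity)]
          exact ENNReal.ofReal_le_ofReal (hf x ((le_max_right _ _).trans_lt hx))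
    _ ≤ ∫⁻ x in {x | R < ‖x‖}, ENNReal.ofReal (f x) ∂μ :=
        lintegral_mono_set fun x (hx : R₂ < ‖x‖) =>
          show R < ‖x‖ from (le_max_left _ _).trans_lt hx

end Radial

namespace Polynomial

variable {𝕜 : Type*} [NormedRing 𝕜] [NormMulClass 𝕜] [NormOneClass 𝕜]

theorem norm_eval_le_mul_norm_pow (p : 𝕜[X]) :
    ∃ K, ∀ z : 𝕜, 1 ≤ ‖z‖ → ‖p.eval z‖ ≤ K * ‖z‖ ^ p.natDegree := by
  refine ⟨∑ i ∈ Finset.range (p.natDegree + 1), ‖p.coeff i‖, fun z hz => ?_⟩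
  rw [eval_eq_sum_range, Finset.sum_mul]
  refine (norm_sum_le _ _).trans (Finset.sum_le_sum fun i hi => ?_)
  rw [norm_mul, norm_pow]
  gcongr
  exact Nat.lt_succ_iff.1 (Finset.mem_range.1 hi)

theorem exists_mul_norm_pow_le_norm_eval {p : 𝕜[X]} (hp : p ≠ 0) :
    ∃ c > 0, ∃ R, ∀ z : 𝕜, R ≤ ‖z‖ → c * ‖z‖ ^ p.natDegree ≤ ‖p.eval z‖ := by
  obtain ⟨c, hc, hbound⟩ :=
    (isEquivalent_cobounded_leading_monomial (P := p)).symm.isBigO.exists_pos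
  obtain ⟨R, -, hR⟩ := hasBasis_cobounded_norm.eventually_iff.1 hbound.bound
  have ha : 0 < ‖p.leadingCoeff‖ := norm_pos_iff.2 (leadingCoeff_ne_zero.2 hp)
  refine ⟨‖p.leadingCoeff‖ / c, div_pos ha hc, R, fun z hz => ?_⟩
  have := hR hz
  rw [norm_mul, norm_pow] at this
  rw [div_mul_eq_mul_div, div_le_iff₀ hc]
  linarith

end Polynomial

theorem exp_two_mul_mem_Icc_of_abs_add_mul_log_le {x a C r : ℝ} (hC : 0 ≤ C) (hr : 1 ≤ r)
    (hx : |x + a * log r| ≤ C / r) :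
    exp (-(2 * C)) * r ^ (-(2 * a)) ≤ exp (2 * x) ∧ exp (2 * x) ≤ exp (2 * C) * r ^ (-(2 * a)) := by
  have hCr : C / r ≤ C := div_le_self hC hr
  rw [rpow_def_of_pos (one_pos.trans_le hr), ← exp_add, ← exp_add, exp_le_exp, exp_le_exp]
  constructor <;> linarith [abs_le.1 hx]

section ZeroModes

variable {Φ R₀ C : ℝ} {h : ℂ → ℝ}

theorem setLIntegral_exp_mul_norm_eval_sq_lt_top_iff (hR₀ : 1 ≤ R₀) (hC : 0 ≤ C)
    (hasym : ∀ z : ℂ, R₀ ≤ ‖z‖ → |h z + (Φ / (2 * π)) * log ‖z‖| ≤ C / ‖z‖)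
    {p : ℂ[X]} (hp : p ≠ 0) :
    ∫⁻ z in {z : ℂ | R₀ < ‖z‖}, ENNReal.ofReal (exp (2 * h z) * ‖p.eval z‖ ^ 2) < ∞ ↔
      (p.natDegree : ℝ) < Φ / (2 * π) - 1 := by
  set α := Φ / (2 * π)
  set d := p.natDegree
  have hR₀' : 0 < R₀ := one_pos.trans_le hR₀
  have hweight : ∀ z : ℂ, R₀ ≤ ‖z‖ → exp (-(2 * C)) * ‖z‖ ^ (-(2 * α)) ≤ exp (2 * h z) ∧
      exp (2 * h z) ≤ exp (2 * C) * ‖z‖ ^ (-(2 * α)) := fun z hz =>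
    exp_two_mul_mem_Icc_of_abs_add_mul_log_le hC (hR₀.trans hz) (hasym z hz)
  have hmonomial : ∀ z : ℂ, 0 < ‖z‖ →
      ‖z‖ ^ (-(2 * α)) * (‖z‖ ^ d) ^ 2 = ‖z‖ ^ (2 * d - 2 * α) := fun z hz => by
    rw [← pow_mul, ← rpow_natCast, ← rpow_add hz]; push_cast; congr 1; ring
  have hdim : (Module.finrank ℝ ℂ : ℝ) = 2 := by rw [Complex.finrank_real_complex]; norm_num
  constructor
  · intro hfin
    by_contra! hd
    obtain ⟨c, hc, R₁, hlow⟩ := p.exists_mul_norm_pow_le_norm_eval hp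
    refine hfin.ne (setLIntegral_eq_top_of_mul_rpow_le volume hR₀' (R₁ := max R₀ R₁)
      (m := exp (-(2 * C)) * c ^ 2) (β := 2 * d - 2 * α) (by positivity) (by rw [hdim]; linarith)
      fun z hz => ?_)
    have hz₀ : R₀ ≤ ‖z‖ := (le_max_left _ _).trans hz.le
    calc exp (-(2 * C)) * c ^ 2 * ‖z‖ ^ (2 * d - 2 * α)
        = exp (-(2 * C)) * ‖z‖ ^ (-(2 * α)) * (c * ‖z‖ ^ d) ^ 2 := by
          rw [← hmonomial z (hR₀'.trans_le hz₀)]; ring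
      _ ≤ exp (2 * h z) * ‖p.eval z‖ ^ 2 := by
          gcongr
          · exact (hweight z hz₀).1
          · exact hlow z ((le_max_right _ _).trans hz.le)
  · intro hd
    obtain ⟨K, hup⟩ := p.norm_eval_le_mul_norm_pow
    refine setLIntegral_lt_top_of_le_mul_rpow volume hR₀' (M := exp (2 * C) * K ^ 2)
      (β := 2 * d - 2 * α) (by rw [hdim]; linarith) fun z hz => ?_
    have hz1 : 1 ≤ ‖z‖ := hR₀.trans hz.le
    calc exp (2 * h z) * ‖p.eval z‖ ^ 2
        ≤ exp (2 * C) * ‖z‖ ^ (-(2 * α)) * (K * ‖z‖ ^ d) ^ 2 := by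
          gcongr
          · exact (hweight z hz.le).2
          · exact hup z hz1
      _ = exp (2 * C) * K ^ 2 * ‖z‖ ^ (2 * d - 2 * α) := by
          rw [← hmonomial z (one_pos.trans_le hz1)]; ring

end ZeroModes

theorem zero_mode_space_dimension_general
    (Φ R₀ C : ℝ) (hR₀ : 1 ≤ R₀) (hC : 0 ≤ C)
    (h : ℂ → ℝ)
    (hasym : ∀ z : ℂ, R₀ ≤ ‖z‖ →
      |h z + (Φ / (2 * Real.pi)) * Real.log (‖z‖)| ≤ C / ‖z‖) :
    ∃ V : Submodule ℂ (Polynomial ℂ),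
      (∀ p : Polynomial ℂ, p ∈ V ↔
        (∫⁻ z in {z : ℂ | R₀ < ‖z‖},
            ENNReal.ofReal (Real.exp (2 * h z) * ‖Polynomial.eval z p‖ ^ 2)) < ⊤) ∧
      FiniteDimensional ℂ V ∧
      Module.finrank ℂ V = (⌈Φ / (2 * Real.pi) - 1⌉).toNat := by
  set n := (⌈Φ / (2 * π) - 1⌉).toNat
  refine ⟨degreeLT ℂ n, fun p => ?_, inferInstance, ?_⟩
  · rcases eq_or_ne p 0 with rfl | hp
    · simp
    · rw [setLIntegral_exp_mul_norm_eval_sq_lt_top_iff hR₀ hC hasym hp, mem_degreeLT,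
        ← natDegree_lt_iff_degree_lt hp, Int.lt_toNat, Int.lt_ceil, Int.cast_natCast]
  · rw [Module.finrank_eq_card_basis (degreeLT.basis ℂ n), Fintype.card_fin]

/-- Dimension count of spin-up zero modes in Theorem 2.1 (Aharonov–Casher on the
plane with holes): the set of polynomials `p` with `e^{h} p(z)` square integrable
at infinity is a finite-dimensional `ℂ`-subspace of `ℂ[X]` of dimension
`max(0, ⌈Φ/2π − 1⌉)`, i.e. the number of naturals `n` with `n < Φ/2π − 1`. -/
theorem zero_mode_space_dimension
    (Φ R₀ C : ℝ) (hR₀ : 1 ≤ R₀) (hC : 0 ≤ C)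
    (h : ℂ → ℝ) (hmeas : Measurable h)
    (hasym : ∀ z : ℂ, R₀ ≤ ‖z‖ →
      |h z + (Φ / (2 * Real.pi)) * Real.log (‖z‖)| ≤ C / ‖z‖) :
    ∃ V : Submodule ℂ (Polynomial ℂ),
      (∀ p : Polynomial ℂ, p ∈ V ↔
        (∫⁻ z in {z : ℂ | R₀ < ‖z‖},
            ENNReal.ofReal (Real.exp (2 * h z) * ‖Polynomial.eval z p‖ ^ 2)) < ⊤) ∧
      FiniteDimensional ℂ V ∧
      Module.finrank ℂ V = (⌈Φ / (2 * Real.pi) - 1⌉).toNat :=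
  zero_mode_space_dimension_general Φ R₀ C hR₀ hC h hasym
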